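/- arXiv:1111.0460 — 2 statements merged into one kernel-verified Lean document; each statement's English description precedes it below -/
import Mathlib

section
/- Let B = {e_k} be a quasi-greedy basis with quasi-greedy constant K in a real Banach space X. For any finite set Γ ⊂ ℕ, the coordinate projection S_Γ(x) = Σ_{k∈Γ} a_k(x) e_k satisfies ‖S_Γ(x)‖ ≲ 8K⁴·(Σ_{k=1}^{|Γ|} μ(k)/k)·‖x‖ for all x ∈ X, with implicit constant independent of Γ and x. -/
open Finset Filter

/-- A (seminormalized Schauder) basis of a real normed space, given by the basis
vectors `e k` together with the coefficient functionals `coeff k`. -/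
structure QGBasis (X : Type*) [NormedAddCommGroup X] [NormedSpace ℝ X] where
  e : ℕ → X
  coeff : ℕ → X → ℝ
  coeff_add : ∀ k x y, coeff k (x + y) = coeff k x + coeff k y
  coeff_smul : ∀ (k : ℕ) (c : ℝ) (x : X), coeff k (c • x) = c * coeff k x
  coeff_e : ∀ j k, coeff j (e k) = if j = k then 1 else 0
  expansion : ∀ x : X,
    Tendsto (fun N => ∑ k ∈ Finset.range N, coeff k x • e k) atTop (nhds x)
  c_norm : ℝ
  C_norm : ℝ
  c_norm_pos : 0 < c_norm
  norm_e_ge : ∀ k, c_norm ≤ ‖e k‖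
  norm_e_le : ∀ k, ‖e k‖ ≤ C_norm

namespace QGBasis

variable {X : Type*} [NormedAddCommGroup X] [NormedSpace ℝ X] (B : QGBasis X)

/-- `π` enumerates the coefficients of `x` in decreasing order of modulus;
position `k` (zero-based) carries the `(k+1)`-st largest coefficient. -/
def IsGreedyPerm (x : X) (π : ℕ → ℕ) : Prop :=
  Function.Bijective π ∧ ∀ k, |B.coeff (π (k + 1)) x| ≤ |B.coeff (π k) x|

/-- The thresholding greedy approximation of order `N` associated to the
greedy enumeration `π`. -/
def G (π : ℕ → ℕ) (N : ℕ) (x : X) : X :=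
  ∑ k ∈ Finset.range N, B.coeff (π k) x • B.e (π k)

/-- `B` is quasi-greedy with constant `K`. -/
def QuasiGreedyWith (K : ℝ) : Prop :=
  ∀ (x : X) (π : ℕ → ℕ), B.IsGreedyPerm x π → ∀ N,
    ‖B.G π N x‖ ≤ K * ‖x‖ ∧ ‖x - B.G π N x‖ ≤ K * ‖x‖

/-- Coordinate projection onto the index set `Γ`. -/
def S (Γ : Finset ℕ) (x : X) : X := ∑ k ∈ Γ, B.coeff k x • B.e k

/-- Right democracy function. -/
noncomputable def hr (N : ℕ) : ℝ :=
  sSup {r | ∃ Γ : Finset ℕ, Γ.card = N ∧ r = ‖∑ k ∈ Γ, B.e k‖}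

/-- Left democracy function. -/
noncomputable def hl (N : ℕ) : ℝ :=
  sInf {r | ∃ Γ : Finset ℕ, Γ.card = N ∧ r = ‖∑ k ∈ Γ, B.e k‖}

/-- The democracy ratio `μ(N) = sup_{1 ≤ k ≤ N} h_r(k)/h_l(k)`. -/
noncomputable def mu (N : ℕ) : ℝ :=
  sSup {r | ∃ k, 1 ≤ k ∧ k ≤ N ∧ r = B.hr k / B.hl k}

/-- Best `N`-term approximation error. -/
noncomputable def sigma (N : ℕ) (x : X) : ℝ :=
  sInf {r | ∃ (Γ : Finset ℕ) (b : ℕ → ℝ),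
    Γ.card ≤ N ∧ r = ‖x - ∑ k ∈ Γ, b k • B.e k‖}

/-- `Γ` is a greedy set for `x`: every coefficient inside dominates every
coefficient outside. -/
def IsGreedySet (x : X) (Γ : Finset ℕ) : Prop :=
  ∀ j ∈ Γ, ∀ i ∉ Γ, |B.coeff i x| ≤ |B.coeff j x|

end QGBasis

/-!
Quasi-greediness bounds every greedy projection `S_Λ` by `K`. Summing greedy projections by
parts bounds the sign truncation: if `t ≤ |aₖ(x)|` on a greedy set `Λ`, then
`t ‖∑_{k ∈ Λ} sgn(aₖ) eₖ‖ ≤ 2K ‖x‖`, and hence `t h_l(|G|) ≤ 4K² ‖x‖` whenever `t ≤ |aₖ(x)|`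
on `G`. Conversely, by convexity a block `P` on which `|aₖ(x)| ≤ t` has
`‖S_P x‖ ≤ t sup_ε ‖∑_{k ∈ P} εₖ eₖ‖ ≲ t h_r(|P|)`. So a block dominated by a set `G` with
`|P| ≤ 2|G|` satisfies `‖S_P x‖ ≲ μ(|G|) ‖x‖`. Splitting `Γ` into its `⌊|Γ|/2⌋` largest
coefficients and the rest, induction on `|Γ|` gives the bound, because monotonicity of `μ`
yields `μ(⌊N/2⌋) ≤ 2 ∑_{N/2 < k ≤ N} μ(k)/k`. Finitely supported `x` suffice, as `S_Γ x`
is the limit of `S_Γ` applied to the partial sums of the expansion of `x`.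
-/

theorem Finset.exists_list_nodup_eq_pairwise_ge {α β : Type*} [DecidableEq α] [LinearOrder β]
    (f : α → β) (s : Finset α) :
    ∃ l : List α, l.Nodup ∧ l.toFinset = s ∧ l.Pairwise (fun i j => f j ≤ f i) := by
  have hperm := s.toList.mergeSort_perm (fun i j => decide (f j ≤ f i))
  refine ⟨_, hperm.nodup_iff.2 s.nodup_toList, by ext; simp [hperm.mem_iff], ?_⟩
  simpa using List.pairwise_mergeSort (le := fun i j => decide (f j ≤ f i))
    (fun a b c hab hbc => by simp only [decide_eq_true_eq] at *; exact hbc.trans hab)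
    (fun a b => by simpa using le_total (f b) (f a)) s.toList

theorem List.bijective_getD_self_of_perm_range {n : ℕ} {l : List ℕ} (hl : l.Perm (List.range n)) :
    Function.Bijective (fun i => l.getD i i) := by
  have hlen : l.length = n := by simpa using hl.length_eq
  have hnd : l.Nodup := hl.nodup_iff.2 List.nodup_range
  have hmem : ∀ m, m ∈ l ↔ m < n := fun m => by simp [hl.mem_iff]
  have hlt : ∀ i (hi : i < n), l.getD i i < n := fun i hi => by
    rw [List.getD_eq_getElem _ _ (by omega)]; exact (hmem _).1 (List.getElem_mem _)
  have hge : ∀ i, n ≤ i → l.getD i i = i := fun i hi => List.getD_eq_default _ _ (by omega)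
  refine ⟨fun i j hij => ?_, fun m => ?_⟩
  · simp only at hij
    rcases lt_or_ge i n with hi | hi <;> rcases lt_or_ge j n with hj | hj
    · rw [List.getD_eq_getElem _ _ (by omega), List.getD_eq_getElem _ _ (by omega)] at hij
      exact hnd.getElem_inj_iff.1 hij
    · have := hlt i hi; rw [hij, hge j hj] at this; omega
    · have := hlt j hj; rw [← hij, hge i hi] at this; omega
    · rwa [hge i hi, hge j hj] at hij
  · rcases lt_or_ge m n with hm | hm
    · obtain ⟨i, hi, rfl⟩ := List.getElem_of_mem ((hmem m).2 hm)
      exact ⟨i, List.getD_eq_getElem _ _ hi⟩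
    · exact ⟨m, hge m hm⟩

theorem Finset.exists_subset_card_eq_forall_le {α β : Type*} [DecidableEq α] [LinearOrder β]
    (f : α → β) {s : Finset α} {n : ℕ} (hn : n ≤ #s) :
    ∃ t ⊆ s, #t = n ∧ ∀ i ∈ s \ t, ∀ j ∈ t, f i ≤ f j := by
  induction n with
  | zero => exact ⟨∅, empty_subset _, card_empty, by simp⟩
  | succ n ih =>
    obtain ⟨t, hts, htn, ht⟩ := ih (by omega)
    obtain ⟨a, ha, hmax⟩ := (s \ t).exists_max_image f
      (by rw [← card_pos, card_sdiff_of_subset hts]; omega)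
    rw [mem_sdiff] at ha
    refine ⟨insert a t, insert_subset ha.1 hts, by rw [card_insert_of_notMem ha.2, htn], ?_⟩
    intro i hi j hj
    rw [mem_sdiff, mem_insert, not_or] at hi
    rcases mem_insert.1 hj with rfl | hj
    · exact hmax i (mem_sdiff.2 ⟨hi.1, hi.2.2⟩)
    · exact ht i (mem_sdiff.2 ⟨hi.1, hi.2.2⟩) j hj

theorem exists_abs_eq_one_norm_add_smul_le {E : Type*} [SeminormedAddCommGroup E]
    [NormedSpace ℝ E] (u v : E) {b s : ℝ} (hb : |b| ≤ s) :
    ∃ c : ℝ, |c| = 1 ∧ ‖u + b • v‖ ≤ ‖u + (c * s) • v‖ := by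
  have hle : ‖u + b • v‖ ≤ max ‖u + s • v‖ ‖u - s • v‖ := by
    rcases (abs_nonneg b).trans hb |>.eq_or_lt with hs | hs
    · obtain rfl : b = 0 := abs_nonpos_iff.1 (by rwa [← hs] at hb)
      simp [← hs]
    refine (convexOn_norm convex_univ).le_on_segment (Set.mem_univ _) (Set.mem_univ _)
      ⟨(s + b) / (2 * s), (s - b) / (2 * s), div_nonneg (by linarith [neg_abs_le b]) (by linarith),
        div_nonneg (by linarith [le_abs_self b]) (by linarith), by field_simp; ring, ?_⟩
    match_scalars <;> field_simp <;> ring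
  rcases max_choice ‖u + s • v‖ ‖u - s • v‖ with h | h <;> rw [h] at hle
  · exact ⟨1, abs_one, by simpa using hle⟩
  · exact ⟨-1, by simp, by simpa [sub_eq_add_neg] using hle⟩

theorem exists_abs_eq_one_norm_add_sum_le {ι E : Type*} [DecidableEq ι]
    [SeminormedAddCommGroup E] [NormedSpace ℝ E] (v : ι → E) (b : ι → ℝ) {s : ℝ} (P : Finset ι)
    (hb : ∀ i ∈ P, |b i| ≤ s) (w : E) :
    ∃ ε : ι → ℝ, (∀ i, |ε i| = 1) ∧
      ‖w + ∑ i ∈ P, b i • v i‖ ≤ ‖w + s • ∑ i ∈ P, ε i • v i‖ := by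
  induction P using Finset.induction_on generalizing w with
  | empty => exact ⟨fun _ => 1, by simp, by simp⟩
  | insert a P ha ih =>
    obtain ⟨ε, hε, hle⟩ := ih (fun i hi => hb i (mem_insert_of_mem hi)) (w + b a • v a)
    obtain ⟨c, hc, hcle⟩ := exists_abs_eq_one_norm_add_smul_le (w + s • ∑ i ∈ P, ε i • v i) (v a)
      (hb a (mem_insert_self a P))
    have hP : ∑ i ∈ P, Function.update ε a c i • v i = ∑ i ∈ P, ε i • v i :=
      sum_congr rfl fun i hi => by rw [Function.update_of_ne (ne_of_mem_of_not_mem hi ha)]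
    refine ⟨Function.update ε a c, fun i => ?_, ?_⟩
    · rcases eq_or_ne i a with rfl | hi
      · simpa using hc
      · simpa [hi] using hε i
    calc ‖w + ∑ i ∈ insert a P, b i • v i‖ = ‖w + b a • v a + ∑ i ∈ P, b i • v i‖ := by
          rw [sum_insert ha, add_assoc]
      _ ≤ ‖w + b a • v a + s • ∑ i ∈ P, ε i • v i‖ := hle
      _ = ‖w + s • ∑ i ∈ P, ε i • v i + b a • v a‖ := by rw [add_right_comm]
      _ ≤ ‖w + s • ∑ i ∈ P, ε i • v i + (c * s) • v a‖ := hcle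
      _ = ‖w + s • ∑ i ∈ insert a P, Function.update ε a c i • v i‖ := by
          rw [sum_insert ha, hP, Function.update_self, smul_add, smul_smul, mul_comm s c]
          abel_nf

theorem norm_sum_smul_le_of_abs_eq_one {ι E : Type*} [SeminormedAddCommGroup E] [Module ℝ E]
    (P : Finset ι) {ε : ι → ℝ} (hε : ∀ i ∈ P, |ε i| = 1) (w : ι → E) :
    ‖∑ i ∈ P, ε i • w i‖ ≤ ‖∑ i ∈ P with ε i = 1, w i‖ + ‖∑ i ∈ P with ε i ≠ 1, w i‖ := by
  rw [← sum_filter_add_sum_filter_not P (fun i => ε i = 1)]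
  refine (norm_add_le _ _).trans (add_le_add (le_of_eq ?_) (le_of_eq ?_))
  · exact congrArg _ (sum_congr rfl fun i hi => by rw [(mem_filter.1 hi).2, one_smul])
  · rw [← norm_neg, ← sum_neg_distrib]
    refine congrArg _ (sum_congr rfl fun i hi => ?_)
    obtain ⟨hiP, hi1⟩ := mem_filter.1 hi
    rcases (abs_eq zero_le_one).1 (hε i hiP) with h | h
    · exact absurd h hi1
    · rw [h, neg_one_smul, neg_neg]

theorem add_half_le_sum_Icc_div {f : ℕ → ℝ} (hf : Monotone f) {m N : ℕ} (hm : 0 ≤ f m)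
    (hmN : m ≤ N) (hN : N ≤ 2 * (N - m)) (hN0 : 0 < N) :
    ∑ k ∈ Icc 1 m, f k / k + f m / 2 ≤ ∑ k ∈ Icc 1 N, f k / k := by
  have hIcc : ∀ n, Icc 1 n = Ioc 0 n := fun n => Icc_add_one_left_eq_Ioc 0 n
  rw [hIcc, hIcc, ← sum_Ioc_consecutive _ m.zero_le hmN]
  have hlow : #(Ioc m N) • (f m / N) ≤ ∑ k ∈ Ioc m N, f k / k :=
    card_nsmul_le_sum _ _ _ fun k hk => by
      obtain ⟨h1, h2⟩ := mem_Ioc.1 hk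
      exact div_le_div₀ (hm.trans (hf h1.le)) (hf h1.le) (Nat.cast_pos.2 (by omega))
        (by exact_mod_cast h2)
  have hN' : (N : ℝ) ≤ 2 * (N - m) := by
    have := (Nat.cast_le (α := ℝ)).2 hN; push_cast [Nat.cast_sub hmN] at this; exact this
  have hhalf : f m / 2 ≤ (N - m) * (f m / N) := by
    rw [mul_div_assoc', le_div_iff₀ (by positivity)]; nlinarith
  rw [Nat.card_Ioc, nsmul_eq_mul, Nat.cast_sub hmN] at hlow
  linarith

namespace QGBasis

variable {X : Type*} [NormedAddCommGroup X] [NormedSpace ℝ X] (B : QGBasis X)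

def coeffₗ (k : ℕ) : X →ₗ[ℝ] ℝ where
  toFun := B.coeff k
  map_add' := B.coeff_add k
  map_smul' := B.coeff_smul k

theorem coeff_sum_smul_e (b : ℕ → ℝ) (A : Finset ℕ) (j : ℕ) :
    B.coeff j (∑ k ∈ A, b k • B.e k) = if j ∈ A then b j else 0 := by
  have h := map_sum (B.coeffₗ j) (fun k => b k • B.e k) A
  simp only [coeffₗ, LinearMap.coe_mk, AddHom.coe_mk, B.coeff_smul, B.coeff_e, mul_ite, mul_one,
    mul_zero] at h
  rw [h, sum_ite_eq]

theorem coeff_S (A : Finset ℕ) (x : X) (j : ℕ) :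
    B.coeff j (B.S A x) = if j ∈ A then B.coeff j x else 0 :=
  B.coeff_sum_smul_e _ A j

theorem norm_sum_e_le_hr (Γ : Finset ℕ) : ‖∑ k ∈ Γ, B.e k‖ ≤ B.hr #Γ := by
  refine le_csSup ⟨#Γ * B.C_norm, ?_⟩ ⟨Γ, rfl, rfl⟩
  rintro _ ⟨Γ', hΓ', rfl⟩
  calc ‖∑ k ∈ Γ', B.e k‖ ≤ ∑ k ∈ Γ', ‖B.e k‖ := norm_sum_le _ _
    _ ≤ #Γ * B.C_norm := by simpa [hΓ'] using sum_le_sum fun k (_ : k ∈ Γ') => B.norm_e_le k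

theorem hl_le_norm_sum_e (Γ : Finset ℕ) : B.hl #Γ ≤ ‖∑ k ∈ Γ, B.e k‖ :=
  csInf_le ⟨0, by rintro _ ⟨_, _, rfl⟩; exact norm_nonneg _⟩ ⟨Γ, rfl, rfl⟩

theorem mu_nonneg (N : ℕ) : 0 ≤ B.mu N :=
  Real.sSup_nonneg <| by
    rintro _ ⟨k, -, -, rfl⟩
    exact div_nonneg (Real.sSup_nonneg <| by rintro _ ⟨_, _, rfl⟩; exact norm_nonneg _)
      (Real.sInf_nonneg <| by rintro _ ⟨_, _, rfl⟩; exact norm_nonneg _)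

theorem mu_bddAbove (N : ℕ) : BddAbove {r | ∃ k, 1 ≤ k ∧ k ≤ N ∧ r = B.hr k / B.hl k} :=
  ((Set.finite_Icc 1 N).image fun k => B.hr k / B.hl k).bddAbove.mono <| by
    rintro _ ⟨k, h1, h2, rfl⟩; exact ⟨k, ⟨h1, h2⟩, rfl⟩

theorem div_le_mu {k N : ℕ} (h1 : 1 ≤ k) (h2 : k ≤ N) : B.hr k / B.hl k ≤ B.mu N :=
  le_csSup (B.mu_bddAbove N) ⟨k, h1, h2, rfl⟩

theorem monotone_mu : Monotone B.mu := by
  intro N M h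
  rcases N.eq_zero_or_pos with rfl | hN
  · simpa [mu] using B.mu_nonneg M
  · exact csSup_le_csSup (B.mu_bddAbove M) ⟨_, 1, le_rfl, hN, rfl⟩ <| by
      rintro _ ⟨k, h1, h2, rfl⟩; exact ⟨k, h1, h2.trans h, rfl⟩

theorem exists_isGreedyPerm {x : X} {A Λ : Finset ℕ} (hA : ∀ k ∉ A, B.coeff k x = 0)
    (hΛ : B.IsGreedySet x Λ) : ∃ π, B.IsGreedyPerm x π ∧ B.G π #Λ x = B.S Λ x := by
  obtain ⟨n, hn⟩ := (A ∪ Λ).exists_nat_subset_range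
  obtain ⟨l₁, hnd₁, rfl, hsort₁⟩ := Λ.exists_list_nodup_eq_pairwise_ge fun k => |B.coeff k x|
  obtain ⟨l₂, hnd₂, hl₂, hsort₂⟩ :=
    (range n \ l₁.toFinset).exists_list_nodup_eq_pairwise_ge fun k => |B.coeff k x|
  have hmem₂ : ∀ k, k ∈ l₂ ↔ k < n ∧ k ∉ l₁ := fun k => by
    rw [← List.mem_toFinset, hl₂]; simp
  -- `π` lists `Λ`, then `range n \ Λ`, each by decreasing `|B.coeff k x|`, and fixes all `k ≥ n`.
  set l := l₁ ++ l₂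
  have hnd : l.Nodup :=
    List.nodup_append.2 ⟨hnd₁, hnd₂, fun a ha b hb hab => ((hmem₂ b).1 hb).2 (hab ▸ ha)⟩
  have hperm : l.Perm (List.range n) := by
    refine List.perm_of_nodup_nodup_toFinset_eq hnd List.nodup_range (ext fun k => ?_)
    have : k ∈ l₁ → k < n := fun hk => mem_range.1 (hn (mem_union_right _ (by simpa using hk)))
    simp only [l, List.toFinset_append, mem_union, List.mem_toFinset, hmem₂, List.mem_range]
    tauto
  have hlen : l.length = n := by simpa using hperm.length_eq
  have hsort : l.Pairwise fun i j => |B.coeff j x| ≤ |B.coeff i x| :=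
    List.pairwise_append.2 ⟨hsort₁, hsort₂, fun a ha b hb =>
      hΛ a (List.mem_toFinset.2 ha) b (by simpa using ((hmem₂ b).1 hb).2)⟩
  refine ⟨fun i => l.getD i i, ⟨List.bijective_getD_self_of_perm_range hperm, fun k => ?_⟩, ?_⟩
  · rcases lt_or_ge (k + 1) n with hk | hk
    · show |B.coeff (l.getD (k + 1) (k + 1)) x| ≤ |B.coeff (l.getD k k) x|
      rw [List.getD_eq_getElem _ _ (by omega), List.getD_eq_getElem _ _ (by omega)]
      exact List.pairwise_iff_getElem.1 hsort k (k + 1) _ _ (by omega)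
    · show |B.coeff (l.getD (k + 1) (k + 1)) x| ≤ _
      rw [List.getD_eq_default _ _ (by omega),
        hA _ fun h => by simpa using (mem_range.1 (hn (mem_union_left _ h))).trans_le hk]
      simp
  · have hinj := (List.bijective_getD_self_of_perm_range hperm).1
    have hcard : #l₁.toFinset = l₁.length := List.toFinset_card_of_nodup hnd₁
    have himage : (range #l₁.toFinset).image (fun i => l.getD i i) = l₁.toFinset := by
      refine eq_of_subset_of_card_le (fun k hk => ?_) ?_
      · obtain ⟨i, hi, rfl⟩ := mem_image.1 hk
        rw [mem_range, hcard] at hi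
        rw [List.getD_eq_getElem _ _ (by simp [l]; omega), List.getElem_append_left hi]
        exact List.mem_toFinset.2 (List.getElem_mem _)
      · rw [card_image_of_injective _ hinj, card_range]
    rw [G, S, ← sum_image (f := fun k => B.coeff k x • B.e k) fun i _ j _ h => hinj h, himage]

theorem norm_S_le_of_forall_finite_support {Γ : Finset ℕ} {c : ℝ}
    (h : ∀ (A : Finset ℕ) (y : X), (∀ k ∉ A, B.coeff k y = 0) → ‖B.S Γ y‖ ≤ c * ‖y‖) (x : X) :
    ‖B.S Γ x‖ ≤ c * ‖x‖ := by
  obtain ⟨n, hn⟩ := Γ.exists_nat_subset_range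
  refine ge_of_tendsto ((B.expansion x).norm.const_mul c) ?_
  filter_upwards [Filter.eventually_ge_atTop n] with M hM
  have hΓ : B.S Γ (B.S (range M) x) = B.S Γ x :=
    sum_congr rfl fun k hk => by
      rw [coeff_S, if_pos (mem_range.2 ((mem_range.1 (hn hk)).trans_le hM))]
  have := h (range M) (B.S (range M) x) fun k hk => by rw [coeff_S, if_neg hk]
  rwa [hΓ] at this

end QGBasis

namespace QGBasis.QuasiGreedyWith

variable {X : Type*} [NormedAddCommGroup X] [NormedSpace ℝ X] {B : QGBasis X} {K : ℝ}

theorem norm_S_le_of_isGreedySet (hK : B.QuasiGreedyWith K) {x : X} {A Λ : Finset ℕ}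
    (hA : ∀ k ∉ A, B.coeff k x = 0) (hΛ : B.IsGreedySet x Λ) : ‖B.S Λ x‖ ≤ K * ‖x‖ := by
  obtain ⟨π, hπ, hG⟩ := B.exists_isGreedyPerm hA hΛ
  exact hG ▸ (hK x π hπ #Λ).1

theorem one_le (hK : B.QuasiGreedyWith K) : 1 ≤ K := by
  have hS : B.S {0} (B.e 0) = B.e 0 := by simp [S, B.coeff_e]
  have hΛ : B.IsGreedySet (B.e 0) {0} := by
    intro j hj i hi
    rw [mem_singleton] at hj hi
    simp [B.coeff_e, hj, hi]
  have h := hK.norm_S_le_of_isGreedySet (A := {0})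
    (fun k hk => by rw [B.coeff_e, if_neg (by simpa using hk)]) hΛ
  rw [hS] at h
  exact le_of_mul_le_mul_right (by simpa using h) (B.c_norm_pos.trans_le (B.norm_e_ge 0))

theorem nonneg (hK : B.QuasiGreedyWith K) : 0 ≤ K :=
  zero_le_one.trans hK.one_le

theorem norm_sum_smul_e_le_of_subset (hK : B.QuasiGreedyWith K) {ε : ℕ → ℝ} {G L : Finset ℕ}
    (hε : ∀ k ∈ L, |ε k| = 1) (hGL : G ⊆ L) :
    ‖∑ k ∈ G, ε k • B.e k‖ ≤ K * ‖∑ k ∈ L, ε k • B.e k‖ := by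
  have hcoeff := B.coeff_sum_smul_e ε L
  have hS : B.S G (∑ k ∈ L, ε k • B.e k) = ∑ k ∈ G, ε k • B.e k :=
    sum_congr rfl fun k hk => by rw [hcoeff, if_pos (hGL hk)]
  rw [← hS]
  refine hK.norm_S_le_of_isGreedySet (fun k hk => by rw [hcoeff, if_neg hk]) fun j hj i _ => ?_
  rw [hcoeff, hcoeff, if_pos (hGL hj), hε j (hGL hj)]
  split_ifs with hi
  · exact (hε i hi).le
  · simp

theorem norm_sum_e_le_of_subset (hK : B.QuasiGreedyWith K) {G L : Finset ℕ} (hGL : G ⊆ L) :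
    ‖∑ k ∈ G, B.e k‖ ≤ K * ‖∑ k ∈ L, B.e k‖ := by
  simpa using hK.norm_sum_smul_e_le_of_subset (ε := fun _ => 1) (fun _ _ => abs_one) hGL

theorem hl_pos (hK : B.QuasiGreedyWith K) {m : ℕ} (hm : 1 ≤ m) : 0 < B.hl m := by
  have hK0 : 0 < K := zero_lt_one.trans_le hK.one_le
  refine (div_pos B.c_norm_pos hK0).trans_le (le_csInf ⟨_, range m, card_range m, rfl⟩ ?_)
  rintro _ ⟨Γ, hΓ, rfl⟩
  obtain ⟨k, hk⟩ : Γ.Nonempty := card_pos.1 (by omega)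
  rw [div_le_iff₀' hK0]
  calc B.c_norm ≤ ‖∑ i ∈ {k}, B.e i‖ := by simpa using B.norm_e_ge k
    _ ≤ K * ‖∑ i ∈ Γ, B.e i‖ := hK.norm_sum_e_le_of_subset (singleton_subset_iff.2 hk)

theorem hr_le_mu_mul_hl (hK : B.QuasiGreedyWith K) {m : ℕ} (hm : 1 ≤ m) :
    B.hr m ≤ B.mu m * B.hl m :=
  (div_le_iff₀ (hK.hl_pos hm)).1 (B.div_le_mu hm le_rfl)

theorem norm_sum_e_le_hr (hK : B.QuasiGreedyWith K) {P : Finset ℕ} {m : ℕ} (hP : #P ≤ m) :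
    ‖∑ k ∈ P, B.e k‖ ≤ K * B.hr m := by
  obtain ⟨Q, hPQ, rfl⟩ := Infinite.exists_superset_card_eq P m hP
  exact (hK.norm_sum_e_le_of_subset hPQ).trans
    (mul_le_mul_of_nonneg_left (B.norm_sum_e_le_hr Q) hK.nonneg)

theorem norm_sum_e_le_two_mul_hr (hK : B.QuasiGreedyWith K) {P : Finset ℕ} {m : ℕ}
    (hP : #P ≤ 2 * m) : ‖∑ k ∈ P, B.e k‖ ≤ 2 * K * B.hr m := by
  obtain ⟨P₁, hP₁, hcard⟩ := exists_subset_card_eq (min_le_right m #P)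
  rw [← sum_sdiff hP₁]
  calc ‖∑ k ∈ P \ P₁, B.e k + ∑ k ∈ P₁, B.e k‖
      ≤ ‖∑ k ∈ P \ P₁, B.e k‖ + ‖∑ k ∈ P₁, B.e k‖ := norm_add_le _ _
    _ ≤ K * B.hr m + K * B.hr m := by
      gcongr
      · exact hK.norm_sum_e_le_hr (by rw [card_sdiff_of_subset hP₁]; omega)
      · exact hK.norm_sum_e_le_hr (by omega)
    _ = 2 * K * B.hr m := by ring

theorem norm_smul_sum_sign_sub_S_le (hK : B.QuasiGreedyWith K) {x : X} {A Λ : Finset ℕ}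
    (hA : ∀ k ∉ A, B.coeff k x = 0) (hΛ : B.IsGreedySet x Λ) {s : ℝ} (hs : 0 < s)
    (hsΛ : ∀ k ∈ Λ, s ≤ |B.coeff k x|) :
    ‖s • ∑ k ∈ Λ, (B.coeff k x / |B.coeff k x|) • B.e k - B.S Λ x‖ ≤ K * ‖x‖ := by
  induction Λ using Finset.induction_on_min_value (fun k => |B.coeff k x|) generalizing s with
  | empty => simpa [S] using mul_nonneg hK.nonneg (norm_nonneg x)
  | insert a Λ ha hmin ih =>
    set r := |B.coeff a x|
    have hsr : s ≤ r := hsΛ a (mem_insert_self a Λ)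
    have hr : 0 < r := hs.trans_le hsr
    have hΛ' : B.IsGreedySet x Λ := fun j hj i hi => by
      by_cases hia : i = a
      · exact hia ▸ hmin j hj
      · exact hΛ j (mem_insert_of_mem hj) i (by simp [hia, hi])
    have hsplit : s • ∑ k ∈ insert a Λ, (B.coeff k x / |B.coeff k x|) • B.e k - B.S (insert a Λ) x
        = (s / r) • (r • ∑ k ∈ Λ, (B.coeff k x / |B.coeff k x|) • B.e k - B.S Λ x)
          + (s / r - 1) • B.S (insert a Λ) x := by
      simp only [S, sum_insert ha, show |B.coeff a x| = r from rfl]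
      match_scalars <;> field_simp
      ring
    have hgreedy := hK.norm_S_le_of_isGreedySet hA hΛ
    rw [hsplit]
    calc _ ≤ (s / r) * (K * ‖x‖) + (1 - s / r) * (K * ‖x‖) := by
          refine (norm_add_le _ _).trans (add_le_add ?_ ?_)
          · rw [norm_smul, Real.norm_of_nonneg (by positivity)]
            exact mul_le_mul_of_nonneg_left (ih hΛ' hr fun k hk => hmin k hk) (by positivity)
          · rw [norm_smul, Real.norm_of_nonpos (by rw [sub_nonpos, div_le_one hr]; exact hsr),
              neg_sub]
            exact mul_le_mul_of_nonneg_left hgreedy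
              (by rw [sub_nonneg, div_le_one hr]; exact hsr)
      _ = K * ‖x‖ := by ring

theorem mul_norm_sum_sign_le (hK : B.QuasiGreedyWith K) {x : X} {A Λ : Finset ℕ}
    (hA : ∀ k ∉ A, B.coeff k x = 0) (hΛ : B.IsGreedySet x Λ) {s : ℝ} (hs : 0 < s)
    (hsΛ : ∀ k ∈ Λ, s ≤ |B.coeff k x|) :
    s * ‖∑ k ∈ Λ, (B.coeff k x / |B.coeff k x|) • B.e k‖ ≤ 2 * K * ‖x‖ := by
  rw [← Real.norm_of_nonneg hs.le, ← norm_smul, ← sub_add_cancel (s • _) (B.S Λ x)]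
  linarith [norm_add_le (s • ∑ k ∈ Λ, (B.coeff k x / |B.coeff k x|) • B.e k - B.S Λ x) (B.S Λ x),
    hK.norm_smul_sum_sign_sub_S_le hA hΛ hs hsΛ, hK.norm_S_le_of_isGreedySet hA hΛ]

theorem mul_norm_sum_e_le (hK : B.QuasiGreedyWith K) {x : X} {A G : Finset ℕ}
    (hA : ∀ k ∉ A, B.coeff k x = 0) {t : ℝ} (htG : ∀ k ∈ G, t ≤ |B.coeff k x|) :
    t * ‖∑ k ∈ G, B.e k‖ ≤ 4 * K ^ 2 * ‖x‖ := by
  rcases le_or_gt t 0 with ht | ht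
  · exact (mul_nonpos_of_nonpos_of_nonneg ht (norm_nonneg _)).trans (by positivity)
  set L := A.filter fun k => t ≤ |B.coeff k x|
  have hmemL : ∀ k, t ≤ |B.coeff k x| → k ∈ L := fun k hk =>
    mem_filter.2 ⟨by_contra fun hkA => by simp [hA k hkA] at hk; linarith, hk⟩
  have hL : B.IsGreedySet x L := fun j hj i hi =>
    (not_le.1 fun h => hi (hmemL i h)).le.trans (mem_filter.1 hj).2
  set ε := fun k => B.coeff k x / |B.coeff k x|
  have hε : ∀ k ∈ L, |ε k| = 1 := fun k hk => by
    have hk' := (mem_filter.1 hk).2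
    have : B.coeff k x ≠ 0 := fun h => by rw [h, abs_zero] at hk'; linarith
    simp [ε, abs_div, this]
  have hGL : G ⊆ L := fun k hk => hmemL k (htG k hk)
  have hG : ∑ k ∈ G, B.e k = ∑ k ∈ G, ε k • (ε k • B.e k) := sum_congr rfl fun k hk => by
    rw [smul_smul, ← abs_mul_abs_self, hε k (hGL hk), one_mul, one_smul]
  have hnorm : ‖∑ k ∈ G, B.e k‖ ≤ 2 * K * ‖∑ k ∈ L, ε k • B.e k‖ := by
    rw [hG]
    refine (norm_sum_smul_le_of_abs_eq_one G (fun k hk => hε k (hGL hk)) _).trans ?_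
    have h₁ := hK.norm_sum_smul_e_le_of_subset hε ((filter_subset (ε · = 1) G).trans hGL)
    have h₂ := hK.norm_sum_smul_e_le_of_subset hε ((filter_subset (ε · ≠ 1) G).trans hGL)
    linarith
  have htrunc := hK.mul_norm_sum_sign_le hA hL ht fun k hk => (mem_filter.1 hk).2
  calc t * ‖∑ k ∈ G, B.e k‖ ≤ 2 * K * (t * ‖∑ k ∈ L, ε k • B.e k‖) := by
        nlinarith [hK.nonneg]
    _ ≤ 2 * K * (2 * K * ‖x‖) := mul_le_mul_of_nonneg_left htrunc (by linarith [hK.nonneg])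
    _ = 4 * K ^ 2 * ‖x‖ := by ring

theorem norm_S_le_mu (hK : B.QuasiGreedyWith K) {x : X} {A P G : Finset ℕ}
    (hA : ∀ k ∉ A, B.coeff k x = 0) (hG : G.Nonempty) (hPG : #P ≤ 2 * #G)
    (hdom : ∀ i ∈ P, ∀ j ∈ G, |B.coeff i x| ≤ |B.coeff j x|) :
    ‖B.S P x‖ ≤ 16 * K ^ 3 * B.mu #G * ‖x‖ := by
  obtain ⟨j₀, hj₀, hmin⟩ := G.exists_min_image (fun k => |B.coeff k x|) hG
  set t := |B.coeff j₀ x|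
  obtain ⟨ε, hε, hle⟩ :=
    exists_abs_eq_one_norm_add_sum_le B.e (B.coeff · x) P (fun i hi => hdom i hi j₀ hj₀) 0
  have hsign : ‖∑ k ∈ P, ε k • B.e k‖ ≤ 4 * K * B.hr #G := by
    have h₁ := hK.norm_sum_e_le_two_mul_hr ((card_filter_le P (ε · = 1)).trans hPG)
    have h₂ := hK.norm_sum_e_le_two_mul_hr ((card_filter_le P (ε · ≠ 1)).trans hPG)
    linarith [norm_sum_smul_le_of_abs_eq_one P (fun k _ => hε k) B.e]
  have hhr := hK.hr_le_mu_mul_hl (card_pos.2 hG)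
  have hhl := B.hl_le_norm_sum_e G
  have htG := hK.mul_norm_sum_e_le hA hmin
  have hK0 := hK.nonneg
  have hmu := B.mu_nonneg #G
  have ht : 0 ≤ t := abs_nonneg _
  rw [zero_add, zero_add, norm_smul, Real.norm_of_nonneg ht] at hle
  calc ‖B.S P x‖ ≤ t * (4 * K * (B.mu #G * B.hl #G)) := by
        refine hle.trans (mul_le_mul_of_nonneg_left (hsign.trans ?_) ht)
        exact mul_le_mul_of_nonneg_left hhr (by positivity)
    _ ≤ 4 * K * B.mu #G * (t * ‖∑ k ∈ G, B.e k‖) := by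
        rw [show t * (4 * K * (B.mu #G * B.hl #G)) = 4 * K * B.mu #G * (t * B.hl #G) by ring]
        gcongr
    _ ≤ 4 * K * B.mu #G * (4 * K ^ 2 * ‖x‖) := by gcongr
    _ = 16 * K ^ 3 * B.mu #G * ‖x‖ := by ring

theorem norm_S_le_sum_mu (hK : B.QuasiGreedyWith K) {x : X} {A : Finset ℕ}
    (hA : ∀ k ∉ A, B.coeff k x = 0) (Γ : Finset ℕ) :
    ‖B.S Γ x‖ ≤ 32 * K ^ 3 * (∑ k ∈ Icc 1 #Γ, B.mu k / k) * ‖x‖ := by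
  induction hN : #Γ using Nat.strong_induction_on generalizing Γ with
  | _ N ih =>
  have hK0 := hK.nonneg
  rcases (by omega : N = 0 ∨ N = 1 ∨ 2 ≤ N) with rfl | rfl | hN2
  · simp [card_eq_zero.1 hN, S]
  · obtain ⟨k, rfl⟩ := card_eq_one.1 hN
    have h := hK.norm_S_le_mu hA (P := {k}) (singleton_nonempty k) (by simp) (by simp)
    simp only [card_singleton, Icc_self, sum_singleton, Nat.cast_one, div_one] at h ⊢
    linarith [mul_nonneg (mul_nonneg (pow_nonneg hK0 3) (B.mu_nonneg 1)) (norm_nonneg x)]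
  · obtain ⟨T, hTΓ, hT, hdom⟩ :=
      Γ.exists_subset_card_eq_forall_le (fun k => |B.coeff k x|) (n := N / 2) (by omega)
    have htop := ih (N / 2) (by omega) T hT
    have hbot := hK.norm_S_le_mu hA (P := Γ \ T) (card_pos.1 (by omega))
      (by rw [card_sdiff_of_subset hTΓ]; omega) hdom
    have hsum := add_half_le_sum_Icc_div B.monotone_mu (B.mu_nonneg (N / 2)) (N.div_le_self 2)
      (by omega) (by omega)
    rw [hT] at hbot
    calc ‖B.S Γ x‖ ≤ ‖B.S T x‖ + ‖B.S (Γ \ T) x‖ := by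
          rw [S, S, S, ← sum_sdiff hTΓ, add_comm]; exact norm_add_le _ _
      _ ≤ 32 * K ^ 3 * (∑ k ∈ Icc 1 (N / 2), B.mu k / k + B.mu (N / 2) / 2) * ‖x‖ := by
          linarith
      _ ≤ 32 * K ^ 3 * (∑ k ∈ Icc 1 N, B.mu k / k) * ‖x‖ := by gcongr

end QGBasis.QuasiGreedyWith

theorem stmt3_general {X : Type*} [NormedAddCommGroup X] [NormedSpace ℝ X]
    (B : QGBasis X) (K : ℝ) (hK : B.QuasiGreedyWith K) :
    ∃ C : ℝ, 0 < C ∧ ∀ (Γ : Finset ℕ) (x : X),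
      ‖B.S Γ x‖ ≤ C * (8 * K ^ 4) *
        (∑ k ∈ Finset.Icc 1 Γ.card, B.mu k / (k : ℝ)) * ‖x‖ := by
  have hK0 : 0 < K := zero_lt_one.trans_le hK.one_le
  refine ⟨4 / K, by positivity, fun Γ x => ?_⟩
  rw [show 4 / K * (8 * K ^ 4) = 32 * K ^ 3 by field_simp; ring]
  exact B.norm_S_le_of_forall_finite_support (fun A y hA => hK.norm_S_le_sum_mu hA Γ) x

/-- bound for coordinate projections (Lemma 2.3),
`‖S_Γ(x)‖ ≲ 8K⁴ (∑_{k=1}^{|Γ|} μ(k)/k) ‖x‖` with implicit constant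
independent of `Γ` and `x`. -/
theorem stmt3 {X : Type*} [NormedAddCommGroup X] [NormedSpace ℝ X] [CompleteSpace X]
    (B : QGBasis X) (K : ℝ) (hK : B.QuasiGreedyWith K) :
    ∃ C : ℝ, 0 < C ∧ ∀ (Γ : Finset ℕ) (x : X),
      ‖B.S Γ x‖ ≤ C * (8 * K ^ 4) *
        (∑ k ∈ Finset.Icc 1 Γ.card, B.mu k / (k : ℝ)) * ‖x‖ :=
  stmt3_general B K hK
end

section
/- Let B be a quasi-greedy basis with quasi-greedy constant K in a real Banach space X and suppose that for some constant C₂ and function η, (1/C₂)η(|Γ|) ≤ ‖Σ_{k∈Γ} e_k‖ for all finite Γ. Then for each k, the k-th largest coefficient modulus satisfies a_k*(x)·η(k) ≤ 4C₂K²·‖Σ_{j=1}^k a_{π(j)}(x) e_{π(j)}‖ ≤ 4C₂K³‖x‖, where π realizes the decreasing rearrangement. -/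
/-
Let `a_i` be the coefficients of `x` in greedy order, `ε_i = a_i / |a_i|` and `y = G_{k+1} x`.
Summation by parts writes `∑_{i≤k} ε_i e_{π i}` through the greedy sums of `y` with the
increasing weights `1 / |a_i|`, so `|a_k| ‖∑_{i≤k} ε_i e_{π i}‖ ≤ 2K ‖y‖`. All coefficients of
this sign vector have modulus one, so any subset of its support is an initial segment of a greedy
ordering; splitting `∑_{i≤k} e_{π i}` into the parts with `ε_i = 1` and `ε_i = -1` costs another
factor `2K`. The lower democracy bound turns `‖∑_{i≤k} e_{π i}‖` into `η(k+1) / C₂`.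
-/

open Finset Filter

theorem Equiv.Perm.exists_map_finset_eq_of_subset {α : Type*} {s t u : Finset α}
    (hs : s ⊆ u) (ht : t ⊆ u) (h : #s = #t) :
    ∃ τ : Equiv.Perm α, s.map τ.toEmbedding = t ∧ u.map τ.toEmbedding = u := by
  classical
  obtain ⟨ρ, hρ⟩ := Equiv.Perm.exists_map_finset_eq (s.subtype (· ∈ u)) (t.subtype (· ∈ u))
    (by simp only [card_subtype, filter_true_of_mem hs, filter_true_of_mem ht, h])
  have hτ : ∀ a (ha : a ∈ u), Equiv.Perm.ofSubtype ρ a = ρ ⟨a, ha⟩ :=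
    fun a ha => Equiv.Perm.ofSubtype_apply_of_mem ρ ha
  refine ⟨Equiv.Perm.ofSubtype ρ, eq_of_subset_of_card_le ?_ (by simp [h]),
    eq_of_subset_of_card_le ?_ (by simp)⟩
  · intro b hb
    obtain ⟨a, ha, rfl⟩ := mem_map.1 hb
    have : ρ ⟨a, hs ha⟩ ∈ (s.subtype (· ∈ u)).map ρ.toEmbedding :=
      mem_map_of_mem _ (by simpa using ha)
    rw [hρ, mem_subtype] at this
    simpa [hτ a (hs ha)] using this
  · intro b hb
    obtain ⟨a, ha, rfl⟩ := mem_map.1 hb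
    simp [hτ a ha]

theorem norm_sum_range_smul_sub_le {E : Type*} [SeminormedAddCommGroup E] [NormedSpace ℝ E]
    {S : ℕ → E} {a : ℕ → ℝ} {M : ℝ} {n : ℕ} (hS₀ : S 0 = 0) (hS : ∀ l, ‖S l‖ ≤ M)
    (ha₀ : 0 ≤ a 0) (ha : ∀ l < n, a l ≤ a (l + 1)) :
    ‖∑ l ∈ range (n + 1), a l • (S (l + 1) - S l)‖ ≤ 2 * a n * M := by
  have hM : 0 ≤ M := (norm_nonneg _).trans (hS 0)
  have han : ∀ l ≤ n, 0 ≤ a l := by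
    intro l hl
    induction l with
    | zero => exact ha₀
    | succ l ih => exact (ih (by omega)).trans (ha l (by omega))
  have hpartial : ∀ l, ∑ i ∈ range l, (S (i + 1) - S i) = S l := fun l => by
    rw [sum_range_sub, hS₀, sub_zero]
  rw [sum_range_by_parts, add_tsub_cancel_right]
  simp only [hpartial]
  calc _ ≤ ‖a n • S (n + 1)‖ + ‖∑ i ∈ range n, (a (i + 1) - a i) • S (i + 1)‖ := norm_sub_le _ _
    _ ≤ a n * M + ∑ i ∈ range n, (a (i + 1) - a i) * M := by
      refine add_le_add ?_ ((norm_sum_le _ _).trans (sum_le_sum fun i hi => ?_))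
      · rw [norm_smul, Real.norm_of_nonneg (han n le_rfl)]
        exact mul_le_mul_of_nonneg_left (hS _) (han n le_rfl)
      · have hai := sub_nonneg.2 (ha i (mem_range.1 hi))
        rw [norm_smul, Real.norm_of_nonneg hai]
        exact mul_le_mul_of_nonneg_left (hS _) hai
    _ = (2 * a n - a 0) * M := by rw [← sum_mul, sum_range_sub]; ring
    _ ≤ 2 * a n * M := by nlinarith [han n le_rfl]

namespace QGBasis

variable {X : Type*} [NormedAddCommGroup X] [NormedSpace ℝ X] (B : QGBasis X)

theorem coeff_sum_smul_e_comp {π : ℕ → ℕ} (hπ : Function.Injective π) (s : Finset ℕ)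
    (c : ℕ → ℝ) (l : ℕ) :
    B.coeff (π l) (∑ i ∈ s, c i • B.e (π i)) = if l ∈ s then c l else 0 := by
  change B.coeffₗ (π l) _ = _
  simp [map_sum, coeffₗ, B.coeff_e, hπ.eq_iff]

theorem coeff_G {π : ℕ → ℕ} (hπ : Function.Injective π) (N l : ℕ) (x : X) :
    B.coeff (π l) (B.G π N x) = if l < N then B.coeff (π l) x else 0 := by
  simp [G, B.coeff_sum_smul_e_comp hπ]

variable {B}

theorem IsGreedyPerm.abs_coeff_anti {x : X} {π : ℕ → ℕ} (hπ : B.IsGreedyPerm x π) {l m : ℕ}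
    (hlm : l ≤ m) : |B.coeff (π m) x| ≤ |B.coeff (π l) x| :=
  antitone_nat_of_succ_le (f := fun k => |B.coeff (π k) x|) hπ.2 hlm

theorem IsGreedyPerm.G {x : X} {π : ℕ → ℕ} (hπ : B.IsGreedyPerm x π) (N : ℕ) :
    B.IsGreedyPerm (B.G π N x) π := by
  refine ⟨hπ.1, fun l => ?_⟩
  simp only [B.coeff_G hπ.1.1]
  split_ifs <;> first | exact hπ.2 l | omega | simp

theorem QuasiGreedyWith.one_le_s9 {K : ℝ} (hK : B.QuasiGreedyWith K) : 1 ≤ K := by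
  have hgreedy : B.IsGreedyPerm (B.e 0) id :=
    ⟨Function.bijective_id, fun l => by simp [B.coeff_e]⟩
  have h := (hK (B.e 0) id hgreedy 0).2
  simp only [G, range_zero, sum_empty, sub_zero] at h
  have he : 0 < ‖B.e 0‖ := B.c_norm_pos.trans_le (B.norm_e_ge 0)
  nlinarith

section QuasiGreedy

variable {K : ℝ} (hK : B.QuasiGreedyWith K) {π : ℕ → ℕ}
include hK

theorem QuasiGreedyWith.norm_sum_smul_e_le (hπ : Function.Bijective π) {ε : ℕ → ℝ} {n : ℕ}
    (hε : ∀ i < n, |ε i| = 1) {P : Finset ℕ} (hP : P ⊆ range n) :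
    ‖∑ i ∈ P, ε i • B.e (π i)‖ ≤ K * ‖∑ i ∈ range n, ε i • B.e (π i)‖ := by
  set v := ∑ i ∈ range n, ε i • B.e (π i)
  obtain ⟨τ, hτP, hτn⟩ := Equiv.Perm.exists_map_finset_eq_of_subset
    (range_subset_range.2 (card_le_card hP |>.trans_eq (card_range n))) hP (card_range _)
  have hτ_mem : ∀ l, τ l ∈ range n ↔ l ∈ range n := fun l => by
    conv_lhs => rw [← hτn]
    exact mem_map' τ.toEmbedding
  have hcoeff : ∀ j, B.coeff (π j) v = if j ∈ range n then ε j else 0 :=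
    B.coeff_sum_smul_e_comp hπ.1 _ ε
  have habs : ∀ l, |B.coeff (π (τ l)) v| = if l < n then 1 else 0 := fun l => by
    simp only [hcoeff, hτ_mem, mem_range]
    split_ifs with h
    · exact hε _ ((hτ_mem l).2 (mem_range.2 h) |> mem_range.1)
    · exact abs_zero
  have hgreedy : B.IsGreedyPerm v (π ∘ τ) := by
    refine ⟨hπ.comp τ.bijective, fun l => ?_⟩
    simp only [Function.comp_apply, habs]
    split_ifs <;> first | omega | norm_num
  have hτ_memP : ∀ i ∈ range #P, τ i ∈ P := fun i hi => hτP ▸ mem_map_of_mem τ.toEmbedding hi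
  calc ‖∑ i ∈ P, ε i • B.e (π i)‖ = ‖B.G (π ∘ τ) #P v‖ := by
        conv_lhs => rw [← hτP, sum_map]
        refine congrArg norm (sum_congr rfl fun i hi => ?_)
        simp [hcoeff, hP (hτ_memP i hi)]
    _ ≤ K * ‖v‖ := (hK v _ hgreedy #P).1

theorem QuasiGreedyWith.norm_sum_e_le (hπ : Function.Bijective π) {ε : ℕ → ℝ} {n : ℕ}
    (hε : ∀ i < n, |ε i| = 1) :
    ‖∑ i ∈ range n, B.e (π i)‖ ≤ 2 * K * ‖∑ i ∈ range n, ε i • B.e (π i)‖ := by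
  have hsplit : ∑ i ∈ range n, B.e (π i) =
      ∑ i ∈ (range n).filter (ε · = 1), ε i • B.e (π i) -
        ∑ i ∈ (range n).filter (¬ε · = 1), ε i • B.e (π i) := by
    rw [← sum_filter_add_sum_filter_not (range n) (ε · = 1), sub_eq_add_neg, ← sum_neg_distrib]
    congr 1 <;> refine sum_congr rfl fun i hi => ?_ <;> rw [mem_filter, mem_range] at hi
    · rw [hi.2, one_smul]
    · have : ε i = -1 := (abs_eq zero_le_one).1 (hε i hi.1) |>.resolve_left hi.2
      rw [this, neg_one_smul, neg_neg]
  rw [hsplit]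
  refine (norm_sub_le _ _).trans ?_
  linarith [hK.norm_sum_smul_e_le hπ hε (filter_subset (ε · = 1) (range n)),
    hK.norm_sum_smul_e_le hπ hε (filter_subset (¬ε · = 1) (range n))]

theorem QuasiGreedyWith.abs_coeff_mul_norm_sum_sign_le {x : X} (hπ : B.IsGreedyPerm x π) {k : ℕ}
    (hk : B.coeff (π k) x ≠ 0) :
    |B.coeff (π k) x| *
        ‖∑ i ∈ range (k + 1), (|B.coeff (π i) x|⁻¹ * B.coeff (π i) x) • B.e (π i)‖ ≤
      2 * K * ‖B.G π (k + 1) x‖ := by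
  set y := B.G π (k + 1) x
  have hpos : ∀ i ≤ k, 0 < |B.coeff (π i) x| := fun i hi =>
    (abs_pos.2 hk).trans_le (hπ.abs_coeff_anti hi)
  have hstep : ∀ i ∈ range (k + 1), (|B.coeff (π i) x|⁻¹ * B.coeff (π i) x) • B.e (π i) =
      |B.coeff (π i) x|⁻¹ • (B.G π (i + 1) y - B.G π i y) := fun i hi => by
    rw [G, G, sum_range_succ, add_sub_cancel_left, B.coeff_G hπ.1.1, if_pos (mem_range.1 hi),
      smul_smul]
  have habel := norm_sum_range_smul_sub_le (S := fun l => B.G π l y)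
    (a := fun i => |B.coeff (π i) x|⁻¹) (M := K * ‖y‖) (n := k) (by simp [G])
    (fun l => (hK y π (hπ.G _) l).1) (inv_nonneg.2 (abs_nonneg _))
    (fun l hl => inv_anti₀ (hpos _ hl) (hπ.2 l))
  rw [sum_congr rfl hstep]
  calc |B.coeff (π k) x| * ‖_‖
      ≤ |B.coeff (π k) x| * (2 * |B.coeff (π k) x|⁻¹ * (K * ‖y‖)) := by gcongr
    _ = 2 * K * ‖y‖ := by field_simp [(hpos k le_rfl).ne']

theorem QuasiGreedyWith.abs_coeff_mul_norm_sum_e_le {x : X} (hπ : B.IsGreedyPerm x π)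
    (k : ℕ) :
    |B.coeff (π k) x| * ‖∑ i ∈ range (k + 1), B.e (π i)‖ ≤ 4 * K ^ 2 * ‖B.G π (k + 1) x‖ := by
  rcases eq_or_ne (B.coeff (π k) x) 0 with h₀ | h₀
  · rw [h₀, abs_zero, zero_mul]; positivity
  have hK₀ : 0 ≤ K := zero_le_one.trans hK.one_le_s9
  have hε : ∀ i < k + 1, |(|B.coeff (π i) x|⁻¹ * B.coeff (π i) x)| = 1 := fun i hi => by
    have : B.coeff (π i) x ≠ 0 :=
      abs_pos.1 ((abs_pos.2 h₀).trans_le (hπ.abs_coeff_anti (Nat.le_of_lt_succ hi)))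
    rw [abs_mul, abs_inv, abs_abs, inv_mul_cancel₀ (abs_ne_zero.2 this)]
  calc |B.coeff (π k) x| * ‖∑ i ∈ range (k + 1), B.e (π i)‖
      ≤ 2 * K * (|B.coeff (π k) x| * ‖∑ i ∈ range (k + 1),
          (|B.coeff (π i) x|⁻¹ * B.coeff (π i) x) • B.e (π i)‖) := by
        rw [mul_left_comm]; gcongr; exact hK.norm_sum_e_le hπ.1 hε
    _ ≤ 2 * K * (2 * K * ‖B.G π (k + 1) x‖) :=
        mul_le_mul_of_nonneg_left (hK.abs_coeff_mul_norm_sum_sign_le hπ h₀) (by positivity)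
    _ = 4 * K ^ 2 * ‖B.G π (k + 1) x‖ := by ring

end QuasiGreedy

end QGBasis

theorem stmt9_general {X : Type*} [NormedAddCommGroup X] [NormedSpace ℝ X]
    (B : QGBasis X) (K : ℝ) (hK : B.QuasiGreedyWith K)
    (η : ℕ → ℝ) (C₂ : ℝ) (hC₂ : 0 < C₂)
    (hlow : ∀ Γ : Finset ℕ, (1 / C₂) * η Γ.card ≤ ‖∑ k ∈ Γ, B.e k‖)
    (x : X) (π : ℕ → ℕ) (hπ : B.IsGreedyPerm x π) (k : ℕ) :
    |B.coeff (π k) x| * η (k + 1) ≤ 4 * C₂ * K ^ 2 * ‖B.G π (k + 1) x‖ ∧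
    4 * C₂ * K ^ 2 * ‖B.G π (k + 1) x‖ ≤ 4 * C₂ * K ^ 3 * ‖x‖ := by
  have hη : η (k + 1) ≤ C₂ * ‖∑ i ∈ range (k + 1), B.e (π i)‖ := by
    have := hlow ((range (k + 1)).map ⟨π, hπ.1.1⟩)
    rwa [card_map, card_range, sum_map, one_div_mul_eq_div, div_le_iff₀' hC₂] at this
  constructor
  · calc |B.coeff (π k) x| * η (k + 1)
        ≤ C₂ * (|B.coeff (π k) x| * ‖∑ i ∈ range (k + 1), B.e (π i)‖) := by
          rw [mul_left_comm]; gcongr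
      _ ≤ C₂ * (4 * K ^ 2 * ‖B.G π (k + 1) x‖) :=
          mul_le_mul_of_nonneg_left (hK.abs_coeff_mul_norm_sum_e_le hπ k) hC₂.le
      _ = 4 * C₂ * K ^ 2 * ‖B.G π (k + 1) x‖ := by ring
  · calc 4 * C₂ * K ^ 2 * ‖B.G π (k + 1) x‖ ≤ 4 * C₂ * K ^ 2 * (K * ‖x‖) := by
          gcongr; exact (hK x π hπ (k + 1)).1
      _ = 4 * C₂ * K ^ 3 * ‖x‖ := by ring

/-- the two-step estimate in Lemma 2.2:
`a_k*(x) η(k) ≤ 4C₂K² ‖∑_{j=1}^k a_{π(j)} e_{π(j)}‖ ≤ 4C₂K³ ‖x‖`.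
Position `k` of the greedy enumeration `π` carries the `(k+1)`-st largest
coefficient, so `∑_{j=1}^{k+1}` is the greedy sum `G π (k+1) x`. -/
theorem stmt9 {X : Type*} [NormedAddCommGroup X] [NormedSpace ℝ X] [CompleteSpace X]
    (B : QGBasis X) (K : ℝ) (hK : B.QuasiGreedyWith K)
    (η : ℕ → ℝ) (C₂ : ℝ) (hC₂ : 0 < C₂)
    (hlow : ∀ Γ : Finset ℕ, (1 / C₂) * η Γ.card ≤ ‖∑ k ∈ Γ, B.e k‖)
    (x : X) (π : ℕ → ℕ) (hπ : B.IsGreedyPerm x π) (k : ℕ) :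
    |B.coeff (π k) x| * η (k + 1) ≤ 4 * C₂ * K ^ 2 * ‖B.G π (k + 1) x‖ ∧
    4 * C₂ * K ^ 2 * ‖B.G π (k + 1) x‖ ≤ 4 * C₂ * K ^ 3 * ‖x‖ :=
  stmt9_general B K hK η C₂ hC₂ hlow x π hπ k
end
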